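/- Let r, n, m ≥ 1 and let P : ℤ^r → ℂ^{m×n} be the symbol of an m×n system of Fourier multipliers on the torus 𝕋^r. Suppose that for every C > 0, every k ∈ ℝ and every finite set F ⊆ ℤ^r there exists ξ ∈ ℤ^r \ F with λ_min(P(ξ)) < C(1+‖ξ‖²)^{k/2}. Then there exists u : ℤ^r → ℂ^n such that ‖u(ξ)‖₂ ≤ 1 for all ξ, the set {ξ ∈ ℤ^r : ‖u(ξ)‖₂ = 1} is infinite (in particular u is not rapidly decreasing), and ξ ↦ P(ξ)u(ξ) ∈ ℂ^m is rapidly decreasing (i.e. the system is not globally hypoelliptic). -/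

import Mathlib

noncomputable section

open scoped BigOperators

/-- Euclidean (ℓ²) norm of a complex vector. -/
def l2norm {n : Type*} [Fintype n] (v : n → ℂ) : ℝ :=
  Real.sqrt (∑ i, ‖v i‖ ^ 2)

/-- Smallest singular value of a complex matrix, characterized as the infimum of
`‖A v‖₂` over unit vectors `v`. -/
def sminVal {m n : Type*} [Fintype m] [Fintype n] (A : Matrix m n ℂ) : ℝ :=
  sInf {x : ℝ | ∃ v : n → ℂ, l2norm v = 1 ∧ x = l2norm (A.mulVec v)}

/-- The weight `1 + ‖ξ‖²` for a frequency `ξ ∈ ℤ^r`. -/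
def wt {r : ℕ} (ξ : Fin r → ℤ) : ℝ :=
  1 + ∑ i, ((ξ i : ℝ)) ^ 2

/-- A vector-valued sequence indexed by `ℤ^r` is rapidly decreasing. -/
def RapidDecayV {r n : ℕ} (u : (Fin r → ℤ) → (Fin n → ℂ)) : Prop :=
  ∀ M : ℝ, 0 < M → ∃ C : ℝ, 0 < C ∧ ∀ ξ, l2norm (u ξ) ≤ C * wt ξ ^ (-(M / 2))

/-! For each `j` the frequencies `ξ` at which `P ξ` has a unit vector `v` with
`‖P ξ v‖ < (1 + ‖ξ‖²)^(-j/2)` form an infinite set, and these sets decrease in `j`. Picking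
distinct frequencies `ξ_j` from them with witnesses `v_j`, the sequence `u` equal to `v_j` at
`ξ_j` and `0` elsewhere has norm one infinitely often, while `P ξ_j v_j` beats every polynomial
weight from some index on; the finitely many earlier terms are absorbed into the constant. -/

open Function Filter Matrix

lemma l2norm_nonneg {n : Type*} [Fintype n] (v : n → ℂ) : 0 ≤ l2norm v :=
  Real.sqrt_nonneg _

@[simp]
lemma l2norm_zero {n : Type*} [Fintype n] : l2norm (0 : n → ℂ) = 0 := by
  simp [l2norm]

lemma l2norm_single_one {n : Type*} [Fintype n] [DecidableEq n] (i : n) :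
    l2norm (Pi.single i 1 : n → ℂ) = 1 := by
  simp [l2norm, Pi.single_apply, apply_ite]

lemma exists_l2norm_eq_one_mulVec_lt_of_sminVal_lt {m n : Type*} [Fintype m] [Fintype n]
    [Nonempty n] {A : Matrix m n ℂ} {c : ℝ} (h : sminVal A < c) :
    ∃ v : n → ℂ, l2norm v = 1 ∧ l2norm (A *ᵥ v) < c := by
  classical
  obtain ⟨i⟩ := ‹Nonempty n›
  have hne : {x | ∃ v : n → ℂ, l2norm v = 1 ∧ x = l2norm (A *ᵥ v)}.Nonempty :=
    ⟨_, Pi.single i 1, l2norm_single_one i, rfl⟩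
  obtain ⟨_, ⟨v, hv, rfl⟩, hlt⟩ := exists_lt_of_csInf_lt hne h
  exact ⟨v, hv, hlt⟩

lemma one_le_wt {r : ℕ} (ξ : Fin r → ℤ) : 1 ≤ wt ξ :=
  le_add_of_nonneg_right (Finset.sum_nonneg fun _ _ => sq_nonneg _)

lemma wt_pos {r : ℕ} (ξ : Fin r → ℤ) : 0 < wt ξ :=
  one_pos.trans_le (one_le_wt ξ)

lemma rapidDecayV_of_eventually_le {r n : ℕ} {w : (Fin r → ℤ) → (Fin n → ℂ)}
    (hw : ∀ M : ℝ, 0 < M → ∀ᶠ ξ in cofinite, l2norm (w ξ) ≤ wt ξ ^ (-(M / 2))) :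
    RapidDecayV w := by
  intro M hM
  have hE := eventually_cofinite.mp (hw M hM)
  set C := 1 + ∑ ξ ∈ hE.toFinset, l2norm (w ξ) * wt ξ ^ (M / 2)
  have hterm : ∀ ξ, 0 ≤ l2norm (w ξ) * wt ξ ^ (M / 2) := fun ξ =>
    mul_nonneg (l2norm_nonneg _) (Real.rpow_nonneg (wt_pos ξ).le _)
  have hC : 1 ≤ C := le_add_of_nonneg_right (Finset.sum_nonneg fun ξ _ => hterm ξ)
  refine ⟨C, one_pos.trans_le hC, fun ξ => ?_⟩
  have hweight : 0 < wt ξ ^ (-(M / 2)) := Real.rpow_pos_of_pos (wt_pos ξ) _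
  by_cases hξ : l2norm (w ξ) ≤ wt ξ ^ (-(M / 2))
  · exact hξ.trans (le_mul_of_one_le_left hweight.le hC)
  · have hle : l2norm (w ξ) * wt ξ ^ (M / 2) ≤ C :=
      (Finset.single_le_sum (fun ξ _ => hterm ξ) (hE.mem_toFinset.mpr hξ)).trans
        (le_add_of_nonneg_left zero_le_one)
    calc l2norm (w ξ) = l2norm (w ξ) * wt ξ ^ (M / 2) * wt ξ ^ (-(M / 2)) := by
          rw [mul_assoc, ← Real.rpow_add (wt_pos ξ), add_neg_cancel, Real.rpow_zero, mul_one]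
      _ ≤ C * wt ξ ^ (-(M / 2)) := mul_le_mul_of_nonneg_right hle hweight.le

lemma exists_injective_forall_mem_of_antitone {α : Type*} {S : ℕ → Set α} (hS : Antitone S)
    (hinf : ∀ j, (S j).Infinite) : ∃ f : ℕ → α, Injective f ∧ ∀ j, f j ∈ S j := by
  classical
  obtain ⟨g, hgS, hg⟩ := exists_seq_of_forall_finset_exists (fun p : ℕ × α => p.2 ∈ S p.1)
    (fun p q => p.1 < q.1 ∧ p.2 ≠ q.2) fun s _ => by
      obtain ⟨x, hxS, hxs⟩ := (hinf (s.sup Prod.fst + 1)).exists_notMem_finset (s.image Prod.snd)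
      refine ⟨(s.sup Prod.fst + 1, x), hxS, fun p hp => ⟨Nat.lt_succ_of_le (s.le_sup hp), ?_⟩⟩
      rintro rfl
      exact hxs (Finset.mem_image_of_mem _ hp)
  have hmono : StrictMono (fun k => (g k).1) := fun _ _ hlt => (hg _ _ hlt).1
  refine ⟨fun k => (g k).2, fun k l hkl => ?_, fun j => hS (hmono.id_le j) (hgS j)⟩
  by_contra hne
  rcases Ne.lt_or_gt hne with hlt | hlt
  exacts [(hg _ _ hlt).2 hkl, (hg _ _ hlt).2 hkl.symm]

section NearKernel

variable {r : ℕ} {m n : Type*} [Fintype m] [Fintype n]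

def nearKernelFreqs (P : (Fin r → ℤ) → Matrix m n ℂ) (j : ℕ) : Set (Fin r → ℤ) :=
  {ξ | ∃ v : n → ℂ, l2norm v = 1 ∧ l2norm (P ξ *ᵥ v) < wt ξ ^ (-(j : ℝ) / 2)}

lemma antitone_nearKernelFreqs (P : (Fin r → ℤ) → Matrix m n ℂ) :
    Antitone (nearKernelFreqs P) := by
  intro i j hij ξ ⟨v, hv, hlt⟩
  refine ⟨v, hv, hlt.trans_le (Real.rpow_le_rpow_of_exponent_le (one_le_wt ξ) ?_)⟩
  have : (i : ℝ) ≤ j := by exact_mod_cast hij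
  linarith

lemma nearKernelFreqs_infinite [Nonempty n] {P : (Fin r → ℤ) → Matrix m n ℂ}
    (hP : ∀ C : ℝ, 0 < C → ∀ k : ℝ, ∀ F : Set (Fin r → ℤ), F.Finite →
      ∃ ξ, ξ ∉ F ∧ sminVal (P ξ) < C * wt ξ ^ (k / 2)) (j : ℕ) :
    (nearKernelFreqs P j).Infinite := fun hfin => by
  obtain ⟨ξ, hξ, hlt⟩ := hP 1 one_pos (-j) _ hfin
  rw [one_mul] at hlt
  exact hξ (exists_l2norm_eq_one_mulVec_lt_of_sminVal_lt hlt)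

end NearKernel

lemma rapidDecayV_mulVec_extend {r m n : ℕ} {P : (Fin r → ℤ) → Matrix (Fin m) (Fin n) ℂ}
    {ξ : ℕ → Fin r → ℤ} (hξ : Injective ξ) {v : ℕ → Fin n → ℂ}
    (hv : ∀ j, l2norm (P (ξ j) *ᵥ v j) < wt (ξ j) ^ (-(j : ℝ) / 2)) :
    RapidDecayV fun x => P x *ᵥ extend ξ v 0 x := by
  refine rapidDecayV_of_eventually_le fun M _ => eventually_cofinite.mpr ?_
  refine ((Set.finite_Iio ⌈M⌉₊).image ξ).subset fun x hx => ?_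
  by_cases hx' : ∃ j, ξ j = x
  · obtain ⟨j, rfl⟩ := hx'
    refine ⟨j, Set.mem_Iio.mpr (not_le.mp fun hj => hx ?_), rfl⟩
    have hMj : M ≤ j := (Nat.le_ceil M).trans (by exact_mod_cast hj)
    rw [hξ.extend_apply]
    exact (hv j).le.trans (Real.rpow_le_rpow_of_exponent_le (one_le_wt _) (by linarith))
  · refine absurd ?_ hx
    simp [extend_apply' _ _ _ hx', Real.rpow_nonneg (wt_pos x).le]

theorem system_not_GH_general (r n m : ℕ) (hn : 1 ≤ n)
    (P : (Fin r → ℤ) → Matrix (Fin m) (Fin n) ℂ)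
    (hP : ∀ C : ℝ, 0 < C → ∀ k : ℝ, ∀ F : Set (Fin r → ℤ), F.Finite →
      ∃ ξ, ξ ∉ F ∧ sminVal (P ξ) < C * wt ξ ^ (k / 2)) :
    ∃ u : (Fin r → ℤ) → (Fin n → ℂ),
      (∀ ξ, l2norm (u ξ) ≤ 1) ∧
      {ξ : Fin r → ℤ | l2norm (u ξ) = 1}.Infinite ∧
      RapidDecayV (fun ξ => (P ξ).mulVec (u ξ)) := by
  have : Nonempty (Fin n) := Fin.pos_iff_nonempty.mp hn
  obtain ⟨ξ, hξ, hξP⟩ := exists_injective_forall_mem_of_antitone (antitone_nearKernelFreqs P)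
    (nearKernelFreqs_infinite hP)
  choose v hv_unit hv_small using hξP
  have hu_on : ∀ j, l2norm (extend ξ v 0 (ξ j)) = 1 := fun j => by
    rw [hξ.extend_apply, hv_unit]
  refine ⟨extend ξ v 0, fun x => ?_, ?_, rapidDecayV_mulVec_extend hξ hv_small⟩
  · by_cases hx : ∃ j, ξ j = x
    · obtain ⟨j, rfl⟩ := hx
      exact (hu_on j).le
    · simp [extend_apply' _ _ _ hx]
  · exact (Set.infinite_range_of_injective hξ).mono (Set.range_subset_iff.mpr hu_on)

theorem system_not_GH (r n m : ℕ) (hr : 1 ≤ r) (hn : 1 ≤ n) (hm : 1 ≤ m)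
    (P : (Fin r → ℤ) → Matrix (Fin m) (Fin n) ℂ)
    (hP : ∀ C : ℝ, 0 < C → ∀ k : ℝ, ∀ F : Set (Fin r → ℤ), F.Finite →
      ∃ ξ, ξ ∉ F ∧ sminVal (P ξ) < C * wt ξ ^ (k / 2)) :
    ∃ u : (Fin r → ℤ) → (Fin n → ℂ),
      (∀ ξ, l2norm (u ξ) ≤ 1) ∧
      {ξ : Fin r → ℤ | l2norm (u ξ) = 1}.Infinite ∧
      RapidDecayV (fun ξ => (P ξ).mulVec (u ξ)) :=
  system_not_GH_general r n m hn P hP
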